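/- The rewriting system on {a,b,c,d,z} with rules aⁿb→z, ac→1, db→1, dc→1, daᵏb→1 (for 1 ≤ k ≤ n-1), and xz→z, zx→z for each letter x, is locally confluent: whenever a word w rewrites in one step to both x and y, there exists a word W with x →* W and y →* W. -/
import Mathlib


inductive Letter | a | b | c | d | z
deriving DecidableEq

/-- The rewriting rules for `M n`: `aⁿb→z`, `ac→1`, `db→1`, `dc→1`,
`daᵏb→1` for `1 ≤ k ≤ n-1`, and `xz→z`, `zx→z` for every letter `x`. -/
def Rule (n : ℕ) : List Letter → List Letter → Prop := fun l r =>
  (l = List.replicate n .a ++ [.b] ∧ r = [.z]) ∨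
  (l = [.a, .c] ∧ r = []) ∨ (l = [.d, .b] ∧ r = []) ∨ (l = [.d, .c] ∧ r = []) ∨
  (∃ k, 1 ≤ k ∧ k ≤ n - 1 ∧ l = .d :: (List.replicate k .a ++ [.b]) ∧ r = []) ∨
  (∃ x : Letter, l = [x, .z] ∧ r = [.z]) ∨ (∃ x : Letter, l = [.z, x] ∧ r = [.z])

/-- One-step rewriting: replace a factor equal to a left-hand side by the right-hand side. -/
def Step (n : ℕ) (x y : List Letter) : Prop :=
  ∃ p s l r, Rule n l r ∧ x = p ++ l ++ s ∧ y = p ++ r ++ s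

open List Relation

set_option linter.constructorNameAsVariable false

lemma rule_len {n : ℕ} {l r : List Letter} (hn : 1 ≤ n) (h : Rule n l r) : 2 ≤ l.length := by
  rcases h with ⟨rfl,rfl⟩|⟨rfl,rfl⟩|⟨rfl,rfl⟩|⟨rfl,rfl⟩|⟨k,hk1,hk2,rfl,rfl⟩|⟨x,rfl,rfl⟩|⟨x,rfl,rfl⟩ <;>
    simp <;> omega

@[simp] lemma repb_eq_single {m : ℕ} {x : Letter} :
    (List.replicate m .a ++ [.b] = [x]) ↔ (m = 0 ∧ x = .b) := by
  cases m
  · simpa using eq_comm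
  · simp [List.replicate_succ]

@[simp] lemma single_eq_repb {m : ℕ} {x : Letter} :
    ([x] = List.replicate m .a ++ [.b]) ↔ (m = 0 ∧ x = .b) := by
  rw [eq_comm, repb_eq_single]

lemma rule_det {n : ℕ} {l r1 r2 : List Letter} (hn : 1 ≤ n)
    (h1 : Rule n l r1) (h2 : Rule n l r2) : r1 = r2 := by
  obtain ⟨m, rfl⟩ : ∃ m, n = m + 1 := ⟨n - 1, by omega⟩
  rcases h1 with ⟨rfl,rfl⟩|⟨rfl,rfl⟩|⟨rfl,rfl⟩|⟨rfl,rfl⟩|⟨k,hk1,hk2,rfl,rfl⟩|⟨x,rfl,rfl⟩|⟨x,rfl,rfl⟩ <;>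
  rcases h2 with ⟨h,rfl⟩|⟨h,rfl⟩|⟨h,rfl⟩|⟨h,rfl⟩|⟨k',hk1',hk2',h,rfl⟩|⟨x',h,rfl⟩|⟨x',h,rfl⟩ <;>
    first
      | rfl
      | (simp_all [List.replicate_succ])
      | (simp_all [List.replicate_succ]; omega)

lemma split_concat {α : Type*} {L v u : List α} {e : α}
    (h : L ++ [e] = v ++ u) (hu : u ≠ []) : ∃ u', u = u' ++ [e] ∧ L = v ++ u' := by
  obtain ⟨u', e', rfl⟩ := u.eq_nil_or_concat.resolve_left hu
  rw [concat_eq_append, ← append_assoc] at h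
  obtain ⟨h1, h2⟩ := append_inj' h rfl
  injection h2 with h3 _
  exact ⟨u', by rw [concat_eq_append, h3], h1⟩

lemma repb_factor {jj nn : ℕ} {X Y : List Letter}
    (h : List.replicate jj Letter.a ++ [Letter.b]
       = X ++ (List.replicate nn Letter.a ++ [Letter.b]) ++ Y) :
    Y = [] ∧ jj = X.length + nn := by
  rcases Y.eq_nil_or_concat with rfl | ⟨Y', e, rfl⟩
  · simp only [List.append_nil, ← List.append_assoc] at h
    obtain ⟨h1, _⟩ := List.append_inj' h rfl
    have := congrArg List.length h1
    simp at this
    exact ⟨rfl, by omega⟩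
  · exfalso
    simp only [List.concat_eq_append, ← List.append_assoc] at h
    obtain ⟨h1, _⟩ := List.append_inj' h rfl
    have hb : Letter.b ∈ List.replicate jj Letter.a := by rw [h1]; simp
    simp [List.mem_replicate] at hb

lemma contain {n : ℕ} {l1 r1 l2 r2 t u : List Letter} (hn : 1 ≤ n)
    (h1 : Rule n l1 r1) (h2 : Rule n l2 r2) (heq : l1 = t ++ l2 ++ u) :
    t = [] ∧ u = [] := by
  obtain ⟨m, rfl⟩ : ∃ m, n = m + 1 := ⟨n - 1, by omega⟩
  have hlen2 := rule_len hn h2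
  have hlen := congrArg List.length heq
  simp only [List.length_append] at hlen
  have finish : t.length = 0 → u.length = 0 → t = [] ∧ u = [] := fun h1 h2 =>
    ⟨List.length_eq_zero_iff.mp h1, List.length_eq_zero_iff.mp h2⟩
  rcases h1 with ⟨e1,rfl⟩|⟨e1,rfl⟩|⟨e1,rfl⟩|⟨e1,rfl⟩|⟨k,hk1,hk2,e1,rfl⟩|⟨x,e1,rfl⟩|⟨x,e1,rfl⟩
  -- case 1 : l1 = aⁿb
  · subst e1
    rcases h2 with ⟨rfl,rfl⟩|⟨rfl,rfl⟩|⟨rfl,rfl⟩|⟨rfl,rfl⟩|⟨k,hk1,hk2,rfl,rfl⟩|⟨x,rfl,rfl⟩|⟨x,rfl,rfl⟩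
    · simp at hlen; exact finish (by omega) (by omega)
    · exfalso
      have hc : Letter.c ∈ List.replicate (m+1) Letter.a ++ [Letter.b] := by rw [heq]; simp
      simp [List.mem_replicate] at hc
    · exfalso
      have hc : Letter.d ∈ List.replicate (m+1) Letter.a ++ [Letter.b] := by rw [heq]; simp
      simp [List.mem_replicate] at hc
    · exfalso
      have hc : Letter.d ∈ List.replicate (m+1) Letter.a ++ [Letter.b] := by rw [heq]; simp
      simp [List.mem_replicate] at hc
    · exfalso
      have hc : Letter.d ∈ List.replicate (m+1) Letter.a ++ [Letter.b] := by rw [heq]; simp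
      simp [List.mem_replicate] at hc
    · exfalso
      have hc : Letter.z ∈ List.replicate (m+1) Letter.a ++ [Letter.b] := by rw [heq]; simp
      simp [List.mem_replicate] at hc
    · exfalso
      have hc : Letter.z ∈ List.replicate (m+1) Letter.a ++ [Letter.b] := by rw [heq]; simp
      simp [List.mem_replicate] at hc
  -- cases 2,3,4 : two-letter l1
  · subst e1; simp at hlen; exact finish (by omega) (by omega)
  · subst e1; simp at hlen; exact finish (by omega) (by omega)
  · subst e1; simp at hlen; exact finish (by omega) (by omega)
  -- case 5 : l1 = daᵏb
  · subst e1
    obtain ⟨j, rfl⟩ : ∃ j, k = j + 1 := ⟨k - 1, by omega⟩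
    rcases h2 with ⟨rfl,rfl⟩|⟨rfl,rfl⟩|⟨rfl,rfl⟩|⟨rfl,rfl⟩|⟨k',hk1',hk2',rfl,rfl⟩|⟨x,rfl,rfl⟩|⟨x,rfl,rfl⟩
    · -- l2 = aⁿb inside daᵏb : impossible
      exfalso
      rcases t with _ | ⟨x, t'⟩
      · simp [List.replicate_succ] at heq
      · rw [List.cons_append, List.cons_append] at heq
        injection heq with hx h'
        obtain ⟨-, hj⟩ := repb_factor h'
        omega
    · exfalso
      have hc : Letter.c ∈ Letter.d :: (List.replicate (j+1) Letter.a ++ [Letter.b]) := by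
        rw [heq]; simp
      simp [List.mem_replicate] at hc
    · -- l2 = db
      exfalso
      rcases t with _ | ⟨x, t'⟩
      · simp [List.replicate_succ] at heq
      · rw [List.cons_append, List.cons_append] at heq
        injection heq with hx h'
        have hd : Letter.d ∈ List.replicate (j+1) Letter.a ++ [Letter.b] := by rw [h']; simp
        simp [List.mem_replicate] at hd
    · exfalso
      have hc : Letter.c ∈ Letter.d :: (List.replicate (j+1) Letter.a ++ [Letter.b]) := by
        rw [heq]; simp
      simp [List.mem_replicate] at hc
    · -- l2 = daᵏ'b
      rcases t with _ | ⟨x, t'⟩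
      · rw [List.nil_append, List.cons_append] at heq
        injection heq with _ h'
        have h'' : List.replicate (j+1) Letter.a ++ [Letter.b]
            = [] ++ (List.replicate k' Letter.a ++ [Letter.b]) ++ u := by simpa using h'
        obtain ⟨hu, -⟩ := repb_factor h''
        exact ⟨rfl, hu⟩
      · exfalso
        rw [List.cons_append, List.cons_append] at heq
        injection heq with hx h'
        have hd : Letter.d ∈ List.replicate (j+1) Letter.a ++ [Letter.b] := by rw [h']; simp
        simp [List.mem_replicate] at hd
    · exfalso
      have hz : Letter.z ∈ Letter.d :: (List.replicate (j+1) Letter.a ++ [Letter.b]) := by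
        rw [heq]; simp
      simp [List.mem_replicate] at hz
    · exfalso
      have hz : Letter.z ∈ Letter.d :: (List.replicate (j+1) Letter.a ++ [Letter.b]) := by
        rw [heq]; simp
      simp [List.mem_replicate] at hz
  -- cases 6,7
  · subst e1; simp at hlen; exact finish (by omega) (by omega)
  · subst e1; simp at hlen; exact finish (by omega) (by omega)

lemma step_ctx {n : ℕ} (p s : List Letter) {x y : List Letter} (h : Step n x y) :
    Step n (p ++ x ++ s) (p ++ y ++ s) := by
  obtain ⟨p', s', l, r, hr, rfl, rfl⟩ := h
  exact ⟨p ++ p', s' ++ s, l, r, hr, by simp, by simp⟩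

lemma rtg_ctx {n : ℕ} (p s : List Letter) {x y : List Letter}
    (h : Relation.ReflTransGen (Step n) x y) :
    Relation.ReflTransGen (Step n) (p ++ x ++ s) (p ++ y ++ s) := by
  induction h with
  | refl => exact .refl
  | tail _ h2 ih => exact ih.tail (step_ctx p s h2)

lemma zcons {n : ℕ} (L : List Letter) :
    Relation.ReflTransGen (Step n) (.z :: L) [.z] := by
  induction L with
  | nil => exact .refl
  | cons c L ih =>
      refine .head ?_ ih
      exact ⟨[], L, [.z, c], [.z],
        Or.inr (Or.inr (Or.inr (Or.inr (Or.inr (Or.inr ⟨c, rfl, rfl⟩))))), rfl, rfl⟩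

lemma endz {n : ℕ} (L : List Letter) :
    Relation.ReflTransGen (Step n) (L ++ [.z]) [.z] := by
  induction L with
  | nil => exact .refl
  | cons c L ih =>
      have h1 : Relation.ReflTransGen (Step n) (c :: (L ++ [.z])) (c :: [Letter.z]) := by
        have := rtg_ctx (n := n) [c] [] ih
        simpa using this
      refine h1.trans (Relation.ReflTransGen.single ?_)
      exact ⟨[], [], [c, .z], [.z],
        Or.inr (Or.inr (Or.inr (Or.inr (Or.inr (Or.inl ⟨c, rfl, rfl⟩))))), by simp, by simp⟩

lemma prefix_anal {n : ℕ} {l2 r2 v' u : List Letter} {E : Letter}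
    (h2 : Rule n l2 r2) (e2 : l2 = (v' ++ [E]) ++ u) (hu : u ≠ [])
    (hE : E = .b ∨ E = .c ∨ E = .z) :
    r2 = [.z] ∧ (E ≠ .z → u = [.z]) := by
  rcases h2 with ⟨rfl,rfl⟩|⟨rfl,rfl⟩|⟨rfl,rfl⟩|⟨rfl,rfl⟩|⟨k,hk1,hk2,rfl,rfl⟩|⟨x,rfl,rfl⟩|⟨x,rfl,rfl⟩
  · -- l2 = aⁿb
    exfalso
    obtain ⟨u'', -, hL⟩ := split_concat e2 hu
    have hEa : E ∈ List.replicate n Letter.a := by rw [hL]; simp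
    simp [List.mem_replicate] at hEa
    obtain ⟨-, rfl⟩ := hEa
    simp at hE
  · -- l2 = ac
    exfalso
    rcases v' with _ | ⟨y, v''⟩
    · simp at e2
      obtain ⟨rfl, -⟩ := e2
      simp at hE
    · rw [List.cons_append, List.cons_append] at e2
      injection e2 with _ h'
      have := congrArg List.length h'
      simp at this
      exact hu (List.length_eq_zero_iff.mp (by omega))
  · -- l2 = db
    exfalso
    rcases v' with _ | ⟨y, v''⟩
    · simp at e2
      obtain ⟨rfl, -⟩ := e2
      simp at hE
    · rw [List.cons_append, List.cons_append] at e2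
      injection e2 with _ h'
      have := congrArg List.length h'
      simp at this
      exact hu (List.length_eq_zero_iff.mp (by omega))
  · -- l2 = dc
    exfalso
    rcases v' with _ | ⟨y, v''⟩
    · simp at e2
      obtain ⟨rfl, -⟩ := e2
      simp at hE
    · rw [List.cons_append, List.cons_append] at e2
      injection e2 with _ h'
      have := congrArg List.length h'
      simp at this
      exact hu (List.length_eq_zero_iff.mp (by omega))
  · -- l2 = daᵏb
    exfalso
    have e2' : (Letter.d :: List.replicate k Letter.a) ++ [Letter.b] = (v' ++ [E]) ++ u := by
      simpa using e2
    obtain ⟨u'', -, hL⟩ := split_concat e2' hu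
    have hEd : E ∈ Letter.d :: List.replicate k Letter.a := by rw [hL]; simp
    simp [List.mem_replicate] at hEd
    rcases hEd with rfl | ⟨-, rfl⟩ <;> simp at hE
  · -- l2 = [x,z]
    rcases v' with _ | ⟨y, v''⟩
    · simp at e2
      obtain ⟨rfl, rfl⟩ := e2
      exact ⟨rfl, fun _ => rfl⟩
    · exfalso
      rw [List.cons_append, List.cons_append] at e2
      injection e2 with _ h'
      have := congrArg List.length h'
      simp at this
      exact hu (List.length_eq_zero_iff.mp (by omega))
  · -- l2 = [z,x]
    rcases v' with _ | ⟨y, v''⟩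
    · simp at e2
      obtain ⟨rfl, rfl⟩ := e2
      exact ⟨rfl, fun h => absurd rfl h⟩
    · exfalso
      rw [List.cons_append, List.cons_append] at e2
      injection e2 with _ h'
      have := congrArg List.length h'
      simp at this
      exact hu (List.length_eq_zero_iff.mp (by omega))

lemma overlap {n : ℕ} {l1 r1 l2 r2 t v u : List Letter} (hn : 1 ≤ n)
    (h1 : Rule n l1 r1) (h2 : Rule n l2 r2)
    (e1 : l1 = t ++ v) (e2 : l2 = v ++ u)
    (ht : t ≠ []) (hv : v ≠ []) (hu : u ≠ []) :
    Relation.ReflTransGen (Step n) (r1 ++ u) [.z]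
      ∧ Relation.ReflTransGen (Step n) (t ++ r2) [.z] := by
  rcases h1 with ⟨rfl,rfl⟩|⟨rfl,rfl⟩|⟨rfl,rfl⟩|⟨rfl,rfl⟩|⟨k,hk1,hk2,rfl,rfl⟩|⟨x,rfl,rfl⟩|⟨x,rfl,rfl⟩
  · -- l1 = aⁿb, E = b
    obtain ⟨v', rfl, -⟩ := split_concat e1 hv
    obtain ⟨hr2, -⟩ := prefix_anal h2 e2 hu (Or.inl rfl)
    exact ⟨zcons u, by rw [hr2]; exact endz t⟩
  · -- l1 = ac, E = c
    have e1' : [Letter.a] ++ [Letter.c] = t ++ v := e1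
    obtain ⟨v', rfl, -⟩ := split_concat e1' hv
    obtain ⟨hr2, hu'⟩ := prefix_anal h2 e2 hu (Or.inr (Or.inl rfl))
    rw [hu' (by simp)]
    exact ⟨.refl, by rw [hr2]; exact endz t⟩
  · -- l1 = db, E = b
    have e1' : [Letter.d] ++ [Letter.b] = t ++ v := e1
    obtain ⟨v', rfl, -⟩ := split_concat e1' hv
    obtain ⟨hr2, hu'⟩ := prefix_anal h2 e2 hu (Or.inl rfl)
    rw [hu' (by simp)]
    exact ⟨.refl, by rw [hr2]; exact endz t⟩
  · -- l1 = dc, E = c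
    have e1' : [Letter.d] ++ [Letter.c] = t ++ v := e1
    obtain ⟨v', rfl, -⟩ := split_concat e1' hv
    obtain ⟨hr2, hu'⟩ := prefix_anal h2 e2 hu (Or.inr (Or.inl rfl))
    rw [hu' (by simp)]
    exact ⟨.refl, by rw [hr2]; exact endz t⟩
  · -- l1 = daᵏb, E = b
    have e1' : (Letter.d :: List.replicate k Letter.a) ++ [Letter.b] = t ++ v := by
      simpa using e1
    obtain ⟨v', rfl, -⟩ := split_concat e1' hv
    obtain ⟨hr2, hu'⟩ := prefix_anal h2 e2 hu (Or.inl rfl)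
    rw [hu' (by simp)]
    exact ⟨.refl, by rw [hr2]; exact endz t⟩
  · -- l1 = [x,z], E = z
    have e1' : [x] ++ [Letter.z] = t ++ v := e1
    obtain ⟨v', rfl, -⟩ := split_concat e1' hv
    obtain ⟨hr2, -⟩ := prefix_anal h2 e2 hu (Or.inr (Or.inr rfl))
    exact ⟨zcons u, by rw [hr2]; exact endz t⟩
  · -- l1 = [z,x]
    rcases t with _ | ⟨t0, t'⟩
    · exact absurd rfl ht
    · rw [List.cons_append] at e1
      injection e1 with h0 h'
      rcases t' with _ | ⟨t1, t''⟩
      · subst h0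
        exact ⟨zcons u, zcons r2⟩
      · exfalso
        rw [List.cons_append] at h'
        injection h' with _ h''
        have := congrArg List.length h''
        simp at this
        exact hv (List.length_eq_zero_iff.mp (by omega))

lemma key {n : ℕ} (hn : 1 ≤ n) {l1 r1 l2 r2 s1 s2 t : List Letter}
    (h1 : Rule n l1 r1) (h2 : Rule n l2 r2)
    (heql : l1 ++ s1 = t ++ (l2 ++ s2)) (p : List Letter) :
    ∃ W, Relation.ReflTransGen (Step n) (p ++ r1 ++ s1) W ∧
         Relation.ReflTransGen (Step n) ((p ++ t) ++ r2 ++ s2) W := by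
  rcases List.append_eq_append_iff.mp heql with ⟨m, rfl, rfl⟩ | ⟨v, rfl, hd⟩
  · -- disjoint: t = l1 ++ m, s1 = m ++ (l2 ++ s2)
    refine ⟨p ++ r1 ++ m ++ r2 ++ s2, Relation.ReflTransGen.single ?_,
      Relation.ReflTransGen.single ?_⟩
    · exact ⟨p ++ r1 ++ m, s2, l2, r2, h2, by simp, by simp⟩
    · exact ⟨p, m ++ (r2 ++ s2), l1, r1, h1, by simp, by simp⟩
  · rcases List.append_eq_append_iff.mp hd with ⟨w, rfl, rfl⟩ | ⟨u, rfl, rfl⟩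
    · -- containment: l1 = t ++ (l2 ++ w)
      obtain ⟨rfl, rfl⟩ := contain (t := t) (u := w) hn h1 h2 (by simp)
      have h1' : Rule n l2 r1 := by simpa using h1
      have hr : r1 = r2 := rule_det hn h1' h2
      subst hr
      refine ⟨p ++ r1 ++ s1, .refl, ?_⟩
      simp only [List.append_nil, List.nil_append]
      exact .refl
    · -- l2 = v ++ u, s1 = u ++ s2
      rcases eq_or_ne v [] with rfl | hv
      · -- adjacent: l1 = t, l2 = u
        refine ⟨p ++ r1 ++ r2 ++ s2, Relation.ReflTransGen.single ?_,
          Relation.ReflTransGen.single ?_⟩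
        · exact ⟨p ++ r1, s2, [] ++ u, r2, h2, by simp, by simp⟩
        · exact ⟨p, r2 ++ s2, t ++ [], r1, h1, by simp, by simp⟩
      rcases eq_or_ne t [] with rfl | ht
      · -- l2 = l1 ++ u : containment the other way
        obtain ⟨-, rfl⟩ := contain (t := ([] : List Letter)) (u := u) hn h2 h1 (by simp)
        have h2' : Rule n v r2 := by simpa using h2
        have h1' : Rule n v r1 := by simpa using h1
        have hr : r1 = r2 := rule_det hn h1' h2'
        subst hr
        refine ⟨p ++ r1 ++ s2, ?_, ?_⟩ <;>
          · simp only [List.append_nil, List.nil_append]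
            exact .refl
      rcases eq_or_ne u [] with rfl | hu
      · -- l1 = t ++ v, l2 = v : containment
        obtain ⟨rfl, -⟩ := contain (t := t) (u := ([] : List Letter)) hn h1 h2 (by simp)
        have h1' : Rule n (v ++ []) r1 := by simpa using h1
        have h2' : Rule n (v ++ []) r2 := by simpa using h2
        have hr : r1 = r2 := rule_det hn h1' h2'
        subst hr
        refine ⟨p ++ r1 ++ s2, ?_, ?_⟩ <;>
          · simp only [List.append_nil, List.nil_append]
            exact .refl
      · -- genuine overlap
        obtain ⟨hx, hy⟩ := overlap hn h1 h2 rfl rfl ht hv hu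
        refine ⟨p ++ [Letter.z] ++ s2, ?_, ?_⟩
        · have := rtg_ctx (n := n) p s2 hx
          simpa [List.append_assoc] using this
        · have := rtg_ctx (n := n) p s2 hy
          simpa [List.append_assoc] using this

/-- The rewriting system is locally confluent. -/
theorem stmt2 (n : ℕ) (hn : 1 ≤ n) :
    ∀ w x y : List Letter, Step n w x → Step n w y →
      ∃ W : List Letter,
        Relation.ReflTransGen (Step n) x W ∧ Relation.ReflTransGen (Step n) y W := by
  intro w x y hx hy
  obtain ⟨p1, s1, l1, r1, h1, rfl, rfl⟩ := hx
  obtain ⟨p2, s2, l2, r2, h2, heq, rfl⟩ := hy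
  have heq' : p1 ++ (l1 ++ s1) = p2 ++ (l2 ++ s2) := by
    simpa [List.append_assoc] using heq
  rcases List.append_eq_append_iff.mp heq' with ⟨t, rfl, hh⟩ | ⟨t, rfl, hh⟩
  · exact key hn h1 h2 hh p1
  · obtain ⟨W, hy', hx'⟩ := key hn h2 h1 hh p2
    exact ⟨W, hx', hy'⟩
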